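/- arXiv:2303.02274 — 3 statements merged into one kernel-verified Lean document; each statement's English description precedes it below -/
import Mathlib

section
/- Let μ be a probability measure on (X, M) and gₙ ≥ 0 with gₙ ∈ L^∞(μ), ∫gₙ dμ = 1. Let P₀ = ⊗_{n∈ℤ}(gₙμ) and P₁ = μ^ℤ on Ω = X^ℤ with Fₙ = σ(V_{-n},...,Vₙ). Suppose lim_{N→∞} (1/N) ∑_{n=-N}^{N} log ‖gₙ‖_{L^∞(μ)} = 0. Then any family of events (Aₙ) with Aₙ ∈ Fₙ satisfying P₁[Aₙ] ≤ exp(-ηn) for all large n (some η>0) also satisfies P₀[Aₙ] ≤ exp(-η'n) for all large n (some η'>0). -/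
open MeasureTheory Filter Set
open scoped ENNReal

section AuxLemmas

variable {ι : Type*} {α : ι → Type*} [DecidableEq ι] [∀ i, MeasurableSpace (α i)]

/-- The marginal integral over `s` of a product of coordinate functions over `s`
is the product of the integrals. -/
lemma aux_lmarginal_prod (μ : ∀ i, Measure (α i)) [∀ i, SigmaFinite (μ i)]
    (h : ∀ i, α i → ℝ≥0∞) (hm : ∀ i, Measurable (h i)) (s : Finset ι) :
    ∀ x : ∀ i, α i, (∫⋯∫⁻_s, (fun y => ∏ i ∈ s, h i (y i)) ∂μ) x
      = ∏ i ∈ s, ∫⁻ t, h i t ∂μ i := by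
  classical
  induction s using Finset.induction with
  | empty => intro x; simp
  | @insert i s hi ih =>
    intro x
    have hmf : ∀ (t : Finset ι), Measurable (fun y : ∀ j, α j => ∏ j ∈ t, h j (y j)) := fun t =>
      Finset.measurable_prod _ (fun j _ => (hm j).comp (measurable_pi_apply j))
    rw [MeasureTheory.lmarginal_insert _ (hmf _) hi]
    have key : ∀ z : ∀ j, α j, (∫⋯∫⁻_s, (fun y => ∏ j ∈ insert i s, h j (y j)) ∂μ) z
        = h i (z i) * ∏ j ∈ s, ∫⁻ t, h j t ∂μ j := by
      intro z
      have h1 : (∫⋯∫⁻_s, (fun y => ∏ j ∈ insert i s, h j (y j)) ∂μ) z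
          = ∫⁻ y : ∀ j : s, α j, h i (z i) *
              ∏ j ∈ s, h j (Function.updateFinset z s y j)
              ∂(Measure.pi fun j : s => μ j) := by
        simp only [MeasureTheory.lmarginal]
        congr 1
        funext y
        rw [Finset.prod_insert hi]
        congr 2
        simp [Function.updateFinset_def, hi]
      rw [h1, MeasureTheory.lintegral_const_mul]
      · have h2 : (∫⁻ y : ∀ j : s, α j, ∏ j ∈ s, h j (Function.updateFinset z s y j)
            ∂(Measure.pi fun j : s => μ j))
            = (∫⋯∫⁻_s, (fun y => ∏ j ∈ s, h j (y j)) ∂μ) z := rfl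
        rw [h2, ih z]
      · exact Finset.measurable_prod _ (fun j _ => (hm j).comp
          ((measurable_pi_apply j).comp measurable_updateFinset))
    simp_rw [key, Function.update_self]
    rw [MeasureTheory.lintegral_mul_const _ (hm i), Finset.prod_insert hi]

/-- Finite product of `withDensity` measures is `withDensity` of the product of densities. -/
lemma aux_pi_withDensity [Fintype ι] [Nonempty (∀ i, α i)]
    (μ : ∀ i, Measure (α i)) [∀ i, SigmaFinite (μ i)]
    (h : ∀ i, α i → ℝ≥0∞) (hm : ∀ i, Measurable (h i))
    [∀ i, SigmaFinite ((μ i).withDensity (h i))] :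
    Measure.pi (fun i => (μ i).withDensity (h i))
      = (Measure.pi μ).withDensity (fun x => ∏ i, h i (x i)) := by
  classical
  refine Measure.pi_eq fun f hf => ?_
  obtain ⟨x₀⟩ := (inferInstance : Nonempty (∀ i, α i))
  have hind : ∀ x : ∀ i, α i,
      (Set.univ.pi f).indicator (fun x => ∏ i, h i (x i)) x
        = ∏ i, (f i).indicator (h i) (x i) := by
    intro x
    by_cases hx : x ∈ Set.univ.pi f
    · rw [Set.indicator_of_mem hx]
      exact Finset.prod_congr rfl fun i _ =>
        (Set.indicator_of_mem (hx i (Set.mem_univ i)) _).symm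
    · rw [Set.indicator_of_notMem hx]
      rw [Set.mem_univ_pi] at hx
      push_neg at hx
      obtain ⟨i, hi⟩ := hx
      exact (Finset.prod_eq_zero (Finset.mem_univ i)
        (Set.indicator_of_notMem hi _)).symm
  calc ((Measure.pi μ).withDensity fun x => ∏ i, h i (x i)) (Set.univ.pi f)
      = ∫⁻ x in Set.univ.pi f, ∏ i, h i (x i) ∂(Measure.pi μ) :=
        withDensity_apply _ (MeasurableSet.univ_pi hf)
    _ = ∫⁻ x, (Set.univ.pi f).indicator (fun x => ∏ i, h i (x i)) x ∂(Measure.pi μ) :=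
        (lintegral_indicator (MeasurableSet.univ_pi hf) _).symm
    _ = ∫⁻ x, ∏ i, (f i).indicator (h i) (x i) ∂(Measure.pi μ) := by
        simp_rw [hind]
    _ = (∫⋯∫⁻_Finset.univ, (fun y => ∏ i ∈ Finset.univ, (f i).indicator (h i) (y i)) ∂μ) x₀ :=
        MeasureTheory.lintegral_eq_lmarginal_univ x₀
    _ = ∏ i, ∫⁻ t, (f i).indicator (h i) t ∂μ i :=
        aux_lmarginal_prod μ _ (fun i => (hm i).indicator (hf i)) Finset.univ x₀
    _ = ∏ i, ((μ i).withDensity (h i)) (f i) := by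
        refine Finset.prod_congr rfl fun i _ => ?_
        rw [lintegral_indicator (hf i), withDensity_apply _ (hf i)]

end AuxLemmas

/-- **Statement 3.** For product measures `P₀ = ⊗ gₙμ`, `P₁ = μ^ℤ` on `X^ℤ` and
`F_N = σ(V_{-N},…,V_N)`: if `(1/N) ∑_{n=-N}^N log ‖gₙ‖_∞ → 0`, then exponential
decay of adapted events lifts from `P₁` to `P₀` (main lifting theorem). -/
theorem stmt_5 {X : Type*} [MeasurableSpace X]
    (μ : Measure X) [IsProbabilityMeasure μ]
    (g : ℤ → X → ℝ≥0∞) (hgmeas : ∀ n, Measurable (g n))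
    (hgbd : ∀ n, essSup (g n) μ < ⊤)
    (hgint : ∀ n, ∫⁻ x, g n x ∂μ = 1)
    (P₀ P₁ : Measure (ℤ → X)) [IsProbabilityMeasure P₀] [IsProbabilityMeasure P₁]
    (hP₁ : ∀ (s : Finset ℤ) (f : ℤ → Set X), (∀ i, MeasurableSet (f i)) →
      P₁ {ω | ∀ i ∈ s, ω i ∈ f i} = ∏ i ∈ s, μ (f i))
    (hP₀ : ∀ (s : Finset ℤ) (f : ℤ → Set X), (∀ i, MeasurableSet (f i)) →
      P₀ {ω | ∀ i ∈ s, ω i ∈ f i} = ∏ i ∈ s, (μ.withDensity (g i)) (f i))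
    (F : ℕ → MeasurableSpace (ℤ → X))
    (hFdef : ∀ N, F N = ⨆ i ∈ Finset.Icc (-(N : ℤ)) (N : ℤ),
      MeasurableSpace.comap (fun ω : ℤ → X => ω i) inferInstance)
    (hF : ∀ N, F N ≤ MeasurableSpace.pi)
    (hlog : Tendsto (fun N : ℕ => (1 / (N : ℝ)) *
      ∑ i ∈ Finset.Icc (-(N : ℤ)) (N : ℤ), Real.log ((essSup (g i) μ).toReal))
      atTop (nhds 0)) :
    ∀ (A : ℕ → Set (ℤ → X)), (∀ n, MeasurableSet[F n] (A n)) →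
      ∀ η > (0 : ℝ), ∀ N₁ : ℕ, (∀ n > N₁, P₁ (A n) ≤ ENNReal.ofReal (Real.exp (-η * n))) →
      ∃ η' > (0 : ℝ), ∃ N : ℕ, ∀ n > N, P₀ (A n) ≤ ENNReal.ofReal (Real.exp (-η' * n)) := by
  classical
  intro A hA η hη N₁ hdecay
  -- basic facts
  have hXne : Nonempty X := by
    by_contra hX
    rw [not_nonempty_iff] at hX
    have h1 : μ Set.univ = 1 := measure_univ
    rw [Set.univ_eq_empty_iff.mpr hX, measure_empty] at h1
    exact zero_ne_one h1
  have hc_top : ∀ i : ℤ, essSup (g i) μ ≠ ⊤ := fun i => (hgbd i).ne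
  have hc_one : ∀ i : ℤ, (1 : ℝ≥0∞) ≤ essSup (g i) μ := by
    intro i
    have h1 : ∫⁻ x, g i x ∂μ ≤ ∫⁻ _, essSup (g i) μ ∂μ :=
      lintegral_mono_ae (ENNReal.ae_le_essSup _)
    rwa [hgint i, lintegral_const, measure_univ, mul_one] at h1
  have hwd : ∀ i : ℤ, IsProbabilityMeasure (μ.withDensity (g i)) := fun i =>
    ⟨by rw [withDensity_apply _ MeasurableSet.univ, Measure.restrict_univ, hgint i]⟩
  -- the key comparison between P₀ and P₁ on F n
  have key : ∀ n : ℕ, ∀ B : Set (ℤ → X), MeasurableSet[F n] B →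
      P₀ B ≤ (∏ i ∈ Finset.Icc (-(n : ℤ)) (n : ℤ), essSup (g i) μ) * P₁ B := by
    intro n B hB
    set s : Finset ℤ := Finset.Icc (-(n : ℤ)) (n : ℤ) with hs
    set r : (ℤ → X) → (∀ _ : s, X) := fun ω j => ω (j : ℤ) with hrdef
    have hr : Measurable r := measurable_pi_lambda _ fun j => measurable_pi_apply _
    -- F n ≤ comap r pi
    have hle : F n ≤ MeasurableSpace.comap r MeasurableSpace.pi := by
      rw [hFdef n]
      refine iSup₂_le fun i hi => ?_
      have h1 : (fun ω : ℤ → X => ω i) = (fun x : ∀ _ : s, X => x ⟨i, hi⟩) ∘ r := rfl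
      rw [h1, ← MeasurableSpace.comap_comp]
      exact MeasurableSpace.comap_mono
        (measurable_iff_comap_le.mp (measurable_pi_apply (⟨i, hi⟩ : s)))
    obtain ⟨C, hC, hCB⟩ := MeasurableSpace.measurableSet_comap.mp (hle B hB)
    -- identify the pushforwards
    haveI : ∀ j : s, IsProbabilityMeasure ((fun j : s => μ.withDensity (g (j : ℤ))) j) :=
      fun j => hwd (j : ℤ)
    have hmap1 : Measure.map r P₁ = Measure.pi (fun _ : s => μ) := by
      refine (Measure.pi_eq fun f hf => ?_).symm
      set f' : ℤ → Set X := fun i => if hi : i ∈ s then f ⟨i, hi⟩ else Set.univ with hf'def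
      have hf' : ∀ i, MeasurableSet (f' i) := by
        intro i
        simp only [hf'def]
        split
        · exact hf _
        · exact MeasurableSet.univ
      have hset : r ⁻¹' (Set.univ.pi f) = {ω | ∀ i ∈ s, ω i ∈ f' i} := by
        ext ω
        simp only [Set.mem_preimage, Set.mem_univ_pi, Set.mem_setOf_eq]
        constructor
        · intro hω i hi
          simp only [hf'def, dif_pos hi]
          exact hω ⟨i, hi⟩
        · intro hω j
          have := hω (j : ℤ) j.2
          simpa only [hf'def, dif_pos j.2] using this
      rw [Measure.map_apply hr (MeasurableSet.univ_pi hf), hset, hP₁ s f' hf']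
      rw [← Finset.prod_coe_sort s (fun i => μ (f' i))]
      refine Finset.prod_congr rfl fun j _ => ?_
      simp only [hf'def, dif_pos j.2]
    have hmap0 : Measure.map r P₀ = Measure.pi (fun j : s => μ.withDensity (g (j : ℤ))) := by
      refine (Measure.pi_eq fun f hf => ?_).symm
      set f' : ℤ → Set X := fun i => if hi : i ∈ s then f ⟨i, hi⟩ else Set.univ with hf'def
      have hf' : ∀ i, MeasurableSet (f' i) := by
        intro i
        simp only [hf'def]
        split
        · exact hf _
        · exact MeasurableSet.univ
      have hset : r ⁻¹' (Set.univ.pi f) = {ω | ∀ i ∈ s, ω i ∈ f' i} := by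
        ext ω
        simp only [Set.mem_preimage, Set.mem_univ_pi, Set.mem_setOf_eq]
        constructor
        · intro hω i hi
          simp only [hf'def, dif_pos hi]
          exact hω ⟨i, hi⟩
        · intro hω j
          have := hω (j : ℤ) j.2
          simpa only [hf'def, dif_pos j.2] using this
      rw [Measure.map_apply hr (MeasurableSet.univ_pi hf), hset, hP₀ s f' hf']
      rw [← Finset.prod_coe_sort s (fun i => (μ.withDensity (g i)) (f' i))]
      refine Finset.prod_congr rfl fun j _ => ?_
      simp only [hf'def, dif_pos j.2]
    -- product of densities
    have hpiwd : Measure.pi (fun j : s => μ.withDensity (g (j : ℤ)))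
        = (Measure.pi fun _ : s => μ).withDensity (fun x => ∏ j : s, g (j : ℤ) (x j)) :=
      aux_pi_withDensity (fun _ : s => μ) (fun j : s => g (j : ℤ))
        (fun j => hgmeas (j : ℤ))
    -- a.e. bound on the density
    have hae : ∀ᵐ x ∂(Measure.pi fun _ : s => μ),
        (∏ j : s, g (j : ℤ) (x j)) ≤ ∏ i ∈ s, essSup (g i) μ := by
      have hj : ∀ j : s, ∀ᵐ x ∂(Measure.pi fun _ : s => μ),
          g (j : ℤ) (x j) ≤ essSup (g (j : ℤ)) μ := by
        intro j
        have hbad : μ {t : X | ¬ g (j : ℤ) t ≤ essSup (g (j : ℤ)) μ} = 0 :=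
          ae_iff.mp (ENNReal.ae_le_essSup _)
        refine ae_iff.mpr ?_
        have : {x : ∀ _ : s, X | ¬ g (j : ℤ) (x j) ≤ essSup (g (j : ℤ)) μ}
            = Function.eval j ⁻¹' {t : X | ¬ g (j : ℤ) t ≤ essSup (g (j : ℤ)) μ} := rfl
        rw [this]
        exact Measure.pi_eval_preimage_null _ hbad
      have hall : ∀ᵐ x ∂(Measure.pi fun _ : s => μ),
          ∀ j : s, g (j : ℤ) (x j) ≤ essSup (g (j : ℤ)) μ := ae_all_iff.mpr hj
      filter_upwards [hall] with x hx
      calc (∏ j : s, g (j : ℤ) (x j)) ≤ ∏ j : s, essSup (g (j : ℤ)) μ :=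
            Finset.prod_le_prod' fun j _ => hx j
        _ = ∏ i ∈ s, essSup (g i) μ := Finset.prod_coe_sort s (fun i => essSup (g i) μ)
    rw [← hCB]
    calc P₀ (r ⁻¹' C) = Measure.map r P₀ C := (Measure.map_apply hr hC).symm
      _ = ((Measure.pi fun _ : s => μ).withDensity (fun x => ∏ j : s, g (j : ℤ) (x j))) C := by
          rw [hmap0, hpiwd]
      _ = ∫⁻ x in C, ∏ j : s, g (j : ℤ) (x j) ∂(Measure.pi fun _ : s => μ) :=
          withDensity_apply _ hC
      _ ≤ ∫⁻ _ in C, (∏ i ∈ s, essSup (g i) μ) ∂(Measure.pi fun _ : s => μ) :=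
          lintegral_mono_ae (ae_restrict_of_ae hae)
      _ = (∏ i ∈ s, essSup (g i) μ) * (Measure.pi fun _ : s => μ) C :=
          setLIntegral_const _ _
      _ = (∏ i ∈ s, essSup (g i) μ) * P₁ (r ⁻¹' C) := by
          rw [← hmap1, Measure.map_apply hr hC]
  -- the analytic endgame
  set L : ℕ → ℝ := fun n =>
    ∑ i ∈ Finset.Icc (-(n : ℤ)) (n : ℤ), Real.log ((essSup (g i) μ).toReal) with hLdef
  have hCexp : ∀ n : ℕ, (∏ i ∈ Finset.Icc (-(n : ℤ)) (n : ℤ), essSup (g i) μ)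
      = ENNReal.ofReal (Real.exp (L n)) := by
    intro n
    have htR : ∀ i : ℤ, (0 : ℝ) < (essSup (g i) μ).toReal := by
      intro i
      have := ENNReal.toReal_mono (hc_top i) (hc_one i)
      simpa using lt_of_lt_of_le zero_lt_one this
    rw [hLdef]
    rw [Real.exp_sum]
    have hexp : ∀ i ∈ Finset.Icc (-(n : ℤ)) (n : ℤ),
        Real.exp (Real.log ((essSup (g i) μ).toReal)) = (essSup (g i) μ).toReal :=
      fun i _ => Real.exp_log (htR i)
    rw [Finset.prod_congr rfl hexp]
    rw [ENNReal.ofReal_prod_of_nonneg (fun i _ => (htR i).le)]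
    refine Finset.prod_congr rfl fun i _ => ?_
    rw [ENNReal.ofReal_toReal (hc_top i)]
  -- choose N₂ from hlog
  have hev : ∀ᶠ n : ℕ in atTop, (1 / (n : ℝ)) * L n < η / 2 :=
    hlog.eventually_lt_const (by linarith)
  obtain ⟨N₂, hN₂⟩ := eventually_atTop.mp hev
  refine ⟨η / 2, by linarith, N₁ + N₂ + 1, fun n hn => ?_⟩
  have hn1 : 1 ≤ n := by omega
  have hnN₁ : n > N₁ := by omega
  have hnN₂ : n ≥ N₂ := by omega
  have hnpos : (0 : ℝ) < n := by exact_mod_cast hn1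
  have hLn : L n ≤ η / 2 * n := by
    have h1 := hN₂ n hnN₂
    have h2 : L n = n * ((1 / (n : ℝ)) * L n) := by
      field_simp
    rw [h2]
    calc (n : ℝ) * ((1 / (n : ℝ)) * L n) ≤ n * (η / 2) :=
          mul_le_mul_of_nonneg_left h1.le hnpos.le
      _ = η / 2 * n := mul_comm _ _
  calc P₀ (A n) ≤ (∏ i ∈ Finset.Icc (-(n : ℤ)) (n : ℤ), essSup (g i) μ) * P₁ (A n) :=
        key n (A n) (hA n)
    _ ≤ ENNReal.ofReal (Real.exp (L n)) * ENNReal.ofReal (Real.exp (-η * n)) := by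
        rw [hCexp n]
        exact mul_le_mul_right (hdecay n hnN₁) _
    _ = ENNReal.ofReal (Real.exp (L n) * Real.exp (-η * n)) :=
        (ENNReal.ofReal_mul (Real.exp_nonneg _)).symm
    _ = ENNReal.ofReal (Real.exp (L n + -η * n)) := by rw [Real.exp_add]
    _ ≤ ENNReal.ofReal (Real.exp (-(η / 2) * n)) := by
        apply ENNReal.ofReal_le_ofReal
        apply Real.exp_le_exp.mpr
        nlinarith
end

section
/- Let (Ω, F) be a measurable space with probability measures P₀, P₁, a filtration (Fₙ) with P₀|Fₙ ≪ P₁|Fₙ, Hₙ := d(P₀|Fₙ)/d(P₁|Fₙ), and F_∞ := σ(∪ₙ Fₙ). If C := supₙ log ‖Hₙ‖_{L^∞(P₁)} < ∞, then P₀|F_∞ is absolutely continuous with respect to P₁|F_∞, and moreover P₀[A] ≤ e^C · P₁[A] for all A ∈ F_∞. -/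
open MeasureTheory Filter Set
open scoped ENNReal symmDiff

/-- If `supₙ log ‖Hₙ‖_{L^∞(P₁)} ≤ C < ∞` for the truncated
Radon–Nikodym derivatives along a filtration, then `P₀|F_∞ ≪ P₁|F_∞` and
`P₀[A] ≤ e^C · P₁[A]` for all `A ∈ F_∞ = σ(∪ₙ Fₙ)`. -/
theorem stmt_7 {Ω : Type*} {m0 : MeasurableSpace Ω}
    (P₀ P₁ : Measure Ω) [IsProbabilityMeasure P₀] [IsProbabilityMeasure P₁]
    (ℱ : Filtration ℕ m0)
    (hac : ∀ n, P₀.trim (ℱ.le n) ≪ P₁.trim (ℱ.le n))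
    (H : ℕ → Ω → ℝ≥0∞)
    (hH : ∀ n, H n = (P₀.trim (ℱ.le n)).rnDeriv (P₁.trim (ℱ.le n)))
    (hfin : ∀ n, essSup (H n) P₁ < ⊤)
    (C : ℝ) (hC : ∀ n, Real.log ((essSup (H n) P₁).toReal) ≤ C)
    (hsup : (⨆ n, (ℱ n : MeasurableSpace Ω)) ≤ m0) :
    P₀.trim hsup ≪ P₁.trim hsup ∧
      ∀ A : Set Ω, MeasurableSet[⨆ n, (ℱ n : MeasurableSpace Ω)] A →
        P₀ A ≤ ENNReal.ofReal (Real.exp C) * P₁ A := by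
  set c : ℝ≥0∞ := ENNReal.ofReal (Real.exp C) with hc
  -- Step 1: the inequality on each `ℱ n`.
  have key : ∀ n (t : Set Ω), MeasurableSet[ℱ n] t → P₀ t ≤ c * P₁ t := by
    intro n t ht
    have hle := ℱ.le n
    have htm0 : MeasurableSet t := hle t ht
    haveI : IsFiniteMeasure (P₀.trim hle) := isFiniteMeasure_trim hle
    haveI : IsFiniteMeasure (P₁.trim hle) := isFiniteMeasure_trim hle
    -- `H n` is `ℱ n`-measurable
    have hmeas : Measurable[ℱ n] (H n) := by
      rw [hH n]; exact Measure.measurable_rnDeriv _ _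
    -- essSup bound
    have hM : essSup (H n) P₁ ≤ c := by
      rcases eq_or_ne (essSup (H n) P₁) 0 with h0 | h0
      · simp [h0]
      · have hpos : 0 < (essSup (H n) P₁).toReal :=
          ENNReal.toReal_pos h0 (hfin n).ne
        calc essSup (H n) P₁ = ENNReal.ofReal (essSup (H n) P₁).toReal :=
              (ENNReal.ofReal_toReal (hfin n).ne).symm
          _ ≤ c := ENNReal.ofReal_le_ofReal ((Real.log_le_iff_le_exp hpos).1 (hC n))
    calc P₀ t = (P₀.trim hle) t := (trim_measurableSet_eq hle ht).symm
      _ = ∫⁻ x in t, H n x ∂(P₁.trim hle) := by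
          rw [hH n]; exact (Measure.setLIntegral_rnDeriv' (hac n) ht).symm
      _ = ∫⁻ x, t.indicator (H n) x ∂(P₁.trim hle) := (lintegral_indicator ht _).symm
      _ = ∫⁻ x, t.indicator (H n) x ∂P₁ := lintegral_trim hle (hmeas.indicator ht)
      _ = ∫⁻ x in t, H n x ∂P₁ := lintegral_indicator htm0 _
      _ ≤ ∫⁻ _ in t, essSup (H n) P₁ ∂P₁ :=
          lintegral_mono_ae
            ((ENNReal.ae_le_essSup (H n)).filter_mono (ae_mono Measure.restrict_le_self))
      _ = essSup (H n) P₁ * P₁ t := setLIntegral_const t _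
      _ ≤ c * P₁ t := mul_le_mul_left hM _
  -- Step 2: extend to the generated σ-algebra via measure-dense approximation.
  set 𝒜 : Set (Set Ω) := ⋃ n, {t | MeasurableSet[ℱ n] t} with h𝒜def
  have h𝒜 : IsSetAlgebra 𝒜 := by
    constructor
    · exact mem_iUnion.2 ⟨0, @MeasurableSet.empty Ω (ℱ 0)⟩
    · rintro s hs
      obtain ⟨n, hn⟩ := mem_iUnion.1 hs
      exact mem_iUnion.2 ⟨n, MeasurableSet.compl hn⟩
    · rintro s t hs ht
      obtain ⟨n, hn⟩ := mem_iUnion.1 hs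
      obtain ⟨m, hm⟩ := mem_iUnion.1 ht
      exact mem_iUnion.2 ⟨max n m,
        (ℱ.mono (le_max_left n m) _ hn).union (ℱ.mono (le_max_right n m) _ hm)⟩
  have hgen : (⨆ n, (ℱ n : MeasurableSpace Ω)) = MeasurableSpace.generateFrom 𝒜 :=
    (MeasurableSpace.generateFrom_iUnion_measurableSet _).symm
  have h𝒜key : ∀ t ∈ 𝒜, P₀ t ≤ c * P₁ t := by
    intro t ht
    obtain ⟨n, hn⟩ := mem_iUnion.1 ht
    exact key n t hn
  have h𝒜meas : ∀ t ∈ 𝒜, MeasurableSet[⨆ n, (ℱ n : MeasurableSpace Ω)] t := by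
    intro t ht
    obtain ⟨n, hn⟩ := mem_iUnion.1 ht
    exact le_iSup (fun n => (ℱ n : MeasurableSpace Ω)) n t hn
  set μ : @Measure Ω (⨆ n, (ℱ n : MeasurableSpace Ω)) := P₀.trim hsup + P₁.trim hsup with hμ
  haveI h₀f : @IsFiniteMeasure Ω (⨆ n, (ℱ n : MeasurableSpace Ω)) (P₀.trim hsup) :=
    isFiniteMeasure_trim hsup
  haveI h₁f : @IsFiniteMeasure Ω (⨆ n, (ℱ n : MeasurableSpace Ω)) (P₁.trim hsup) :=
    isFiniteMeasure_trim hsup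
  haveI hμf : @IsFiniteMeasure Ω (⨆ n, (ℱ n : MeasurableSpace Ω)) μ := by
    rw [hμ]; exact @MeasureTheory.isFiniteMeasureAdd Ω _ _ _ h₀f h₁f
  have hdense : @Measure.MeasureDense Ω (⨆ n, (ℱ n : MeasurableSpace Ω)) μ 𝒜 :=
    @Measure.MeasureDense.of_generateFrom_isSetAlgebra_finite Ω (⨆ n, (ℱ n : MeasurableSpace Ω)) μ 𝒜 hμf h𝒜 hgen
  have main : ∀ A : Set Ω, MeasurableSet[⨆ n, (ℱ n : MeasurableSpace Ω)] A →
      P₀ A ≤ c * P₁ A := by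
    intro A hA
    have hAm0 : MeasurableSet A := hsup A hA
    -- Approximation step: for every `δ > 0` we get the bound up to `(exp C + 1) * δ`.
    have step : ∀ δ : ℝ, 0 < δ →
        P₀ A ≤ c * P₁ A + ENNReal.ofReal ((Real.exp C + 1) * δ) := by
      intro δ hδ
      obtain ⟨t, ht𝒜, htδ⟩ := @Measure.MeasureDense.approx Ω (⨆ n, (ℱ n : MeasurableSpace Ω)) μ 𝒜 hdense A hA (@measure_ne_top Ω (⨆ n, (ℱ n : MeasurableSpace Ω)) μ hμf A) δ hδ
      have htm : MeasurableSet[⨆ n, (ℱ n : MeasurableSpace Ω)] t := h𝒜meas t ht𝒜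
      have htm0 : MeasurableSet t := hsup t htm
      -- `P₀ (A \ t) ≤ ofReal δ` and `P₁ (t \ A) ≤ ofReal δ`
      have hsymm : MeasurableSet[⨆ n, (ℱ n : MeasurableSpace Ω)] (A ∆ t) :=
        (hA.diff htm).union (htm.diff hA)
      have hδ₀ : P₀ (A ∆ t) ≤ ENNReal.ofReal δ := by
        rw [← trim_measurableSet_eq hsup hsymm]
        refine le_trans ?_ htδ.le
        rw [hμ, Measure.add_apply]
        exact le_add_right le_rfl
      have hδ₁ : P₁ (A ∆ t) ≤ ENNReal.ofReal δ := by
        rw [← trim_measurableSet_eq hsup hsymm]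
        refine le_trans ?_ htδ.le
        rw [hμ, Measure.add_apply]
        exact le_add_left le_rfl
      have hsub₀ : A \ t ⊆ A ∆ t := by rw [Set.symmDiff_def]; exact Set.subset_union_left
      have hsub₁ : t \ A ⊆ A ∆ t := by rw [Set.symmDiff_def]; exact Set.subset_union_right
      calc P₀ A ≤ P₀ (t ∪ (A \ t)) := measure_mono (fun x hx => by
              by_cases hxt : x ∈ t
              · exact Or.inl hxt
              · exact Or.inr ⟨hx, hxt⟩)
        _ ≤ P₀ t + P₀ (A \ t) := measure_union_le _ _
        _ ≤ c * P₁ t + ENNReal.ofReal δ := by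
            exact add_le_add (h𝒜key t ht𝒜) ((measure_mono hsub₀).trans hδ₀)
        _ ≤ c * (P₁ A + ENNReal.ofReal δ) + ENNReal.ofReal δ := by
            refine add_le_add_left (mul_le_mul_right ?_ c) _
            calc P₁ t ≤ P₁ (A ∪ (t \ A)) := measure_mono (fun x hx => by
                    by_cases hxA : x ∈ A
                    · exact Or.inl hxA
                    · exact Or.inr ⟨hx, hxA⟩)
              _ ≤ P₁ A + P₁ (t \ A) := measure_union_le _ _
              _ ≤ P₁ A + ENNReal.ofReal δ :=
                  add_le_add_right ((measure_mono hsub₁).trans hδ₁) _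
        _ = c * P₁ A + ENNReal.ofReal ((Real.exp C + 1) * δ) := by
            rw [mul_add, add_assoc, hc, ← ENNReal.ofReal_mul (Real.exp_nonneg C),
              ← ENNReal.ofReal_add (by positivity) hδ.le]
            ring_nf
    -- Let `δ → 0`.
    refine ENNReal.le_of_forall_pos_le_add fun ε hε _ => ?_
    have hd : (0:ℝ) < (ε : ℝ) / (Real.exp C + 1) := by positivity
    refine (step _ hd).trans (add_le_add_right ?_ _)
    rw [mul_div_cancel₀ (ε : ℝ) (by positivity)]
    simp [ENNReal.ofReal_coe_nnreal]
  refine ⟨?_, main⟩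
  -- Absolute continuity of the trimmed measures.
  refine Measure.AbsolutelyContinuous.mk fun s hs hs0 => ?_
  rw [trim_measurableSet_eq hsup hs] at hs0 ⊢
  have := main s hs
  rw [hs0, mul_zero] at this
  exact le_antisymm this zero_le
end

section
/- Let μ be a probability measure on (X, M) and gₙ ≥ 0 with gₙ ∈ L^∞(μ), ∫gₙdμ = 1 for all n ∈ ℤ. Let P₀ = ⊗_{n∈ℤ}(gₙμ) and P₁ = μ^ℤ on X^ℤ with the product σ-algebra. If ∑_{n∈ℤ} log‖gₙ‖_{L^∞(μ)} < ∞, then P₀ ≪ P₁ and P₀[A] ≤ C·P₁[A] for all measurable A, where C := ∏_{n∈ℤ} ‖gₙ‖_{L^∞(μ)}. -/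
open MeasureTheory Filter Set
open scoped ENNReal

private lemma ennreal_hasProd {ι : Type*} {a : ι → ℝ≥0∞} (h1 : ∀ i, 1 ≤ a i) :
    HasProd a (⨆ s : Finset ι, ∏ i ∈ s, a i) := by
  have hmono : Monotone fun t : Finset ι => ∏ i ∈ t, a i :=
    fun t u htu => Finset.prod_le_prod_of_subset_of_one_le' htu fun i _ _ => h1 i
  exact tendsto_atTop_iSup hmono

private lemma finset_prod_le_tprod {ι : Type*} {a : ι → ℝ≥0∞} (h1 : ∀ i, 1 ≤ a i)
    (s : Finset ι) : ∏ i ∈ s, a i ≤ ∏' i, a i := by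
  rw [(ennreal_hasProd h1).tprod_eq]
  exact le_iSup (fun t : Finset ι => ∏ i ∈ t, a i) s

private lemma tprod_le_of_forall {ι : Type*} {a : ι → ℝ≥0∞} (h1 : ∀ i, 1 ≤ a i) {x : ℝ≥0∞}
    (h : ∀ s : Finset ι, ∏ i ∈ s, a i ≤ x) : ∏' i, a i ≤ x := by
  rw [(ennreal_hasProd h1).tprod_eq]
  exact iSup_le h

private lemma pi_apply_mono {ι : Type*} [Fintype ι] {α : ι → Type*} [∀ i, MeasurableSpace (α i)]
    (ν κ : ∀ i, Measure (α i)) (h : ∀ i, ν i ≤ κ i) {A : Set (∀ i, α i)}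
    (hA : MeasurableSet A) : Measure.pi ν A ≤ Measure.pi κ A := by
  rw [Measure.pi_def, Measure.pi_def, MeasureTheory.toMeasure_apply _ _ hA,
    MeasureTheory.toMeasure_apply _ _ hA]
  have : OuterMeasure.pi (fun i => (ν i).toOuterMeasure)
      ≤ OuterMeasure.pi (fun i => (κ i).toOuterMeasure) := by
    unfold OuterMeasure.pi
    refine OuterMeasure.le_boundedBy.2 fun t => ?_
    refine (OuterMeasure.boundedBy_le t).trans ?_
    simp only [piPremeasure]
    exact Finset.prod_le_prod' fun i _ => Measure.le_iff'.1 (h i) _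
  exact this _

private lemma pi_smul_meas {ι : Type*} [Fintype ι] {X : Type*} [MeasurableSpace X]
    (μ : Measure X) [IsFiniteMeasure μ] (c : ι → ℝ≥0∞) (hc : ∀ i, c i ≠ ⊤) :
    Measure.pi (fun i => c i • μ) = (∏ i, c i) • Measure.pi (fun _ : ι => μ) := by
  have hsf : ∀ _ : ι, SigmaFinite μ := fun _ => IsFiniteMeasure.toSigmaFinite μ
  haveI : ∀ i, IsFiniteMeasure (c i • μ) := fun i => ⟨by
    rw [Measure.smul_apply, smul_eq_mul]
    exact ENNReal.mul_lt_top (hc i).lt_top (measure_lt_top μ _)⟩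
  refine Measure.pi_eq fun f hf => ?_
  have h2 := @Measure.pi_pi ι (fun _ => X) _ _ (fun _ => μ) hsf f
  simp only [Measure.smul_apply, smul_eq_mul, Measure.pi_pi, Finset.prod_mul_distrib, h2]

private lemma map_proj_eq {X : Type*} [MeasurableSpace X] (ν : ℤ → Measure X)
    [∀ i, IsFiniteMeasure (ν i)]
    (P : Measure (ℤ → X))
    (hP : ∀ (s : Finset ℤ) (f : ℤ → Set X), (∀ i, MeasurableSet (f i)) →
      P {ω | ∀ i ∈ s, ω i ∈ f i} = ∏ i ∈ s, ν i (f i))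
    (s : Finset ℤ) :
    Measure.pi (fun i : s => ν i) = P.map (fun (ω : ℤ → X) (i : s) => ω (i : ℤ)) := by
  classical
  refine Measure.pi_eq fun f hf => ?_
  have hπ : Measurable fun (ω : ℤ → X) (i : s) => ω (i : ℤ) :=
    measurable_pi_lambda _ fun i => measurable_pi_apply _
  rw [Measure.map_apply hπ (MeasurableSet.univ_pi hf)]
  set f' : ℤ → Set X := fun j => if h : j ∈ s then f ⟨j, h⟩ else Set.univ with hf'
  have hmeas : ∀ j, MeasurableSet (f' j) := by
    intro j
    by_cases h : j ∈ s
    · simpa [hf', h] using hf ⟨j, h⟩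
    · simp [hf', h]
  have hset : (fun (ω : ℤ → X) (i : s) => ω (i : ℤ)) ⁻¹' (Set.univ.pi f) = {ω | ∀ i ∈ s, ω i ∈ f' i} := by
    ext ω
    simp only [Set.mem_preimage, Set.mem_pi, Set.mem_univ, forall_true_left, Set.mem_setOf_eq]
    constructor
    · intro h j hj
      simpa [hf', hj] using h ⟨j, hj⟩
    · intro h i
      simpa [hf', i.2] using h i i.2
  rw [hset, hP s f' hmeas, ← Finset.prod_attach s fun j => ν j (f' j), Finset.univ_eq_attach]
  refine Finset.prod_congr rfl fun i _ => ?_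
  simp [hf', i.2]

/-- **Statement 3.** For product measures `P₀ = ⊗ gₙμ`, `P₁ = μ^ℤ` on `X^ℤ` and
if `∑_{n∈ℤ} log ‖gₙ‖_{L^∞(μ)} < ∞`, then `P₀ ≪ P₁` and
`P₀[A] ≤ C·P₁[A]` with `C = ∏_{n∈ℤ} ‖gₙ‖_{L^∞(μ)}`. -/
theorem stmt_8 {X : Type*} [MeasurableSpace X]
    (μ : Measure X) [IsProbabilityMeasure μ]
    (g : ℤ → X → ℝ≥0∞) (hgmeas : ∀ n, Measurable (g n))
    (hgbd : ∀ n, essSup (g n) μ < ⊤)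
    (hgint : ∀ n, ∫⁻ x, g n x ∂μ = 1)
    (P₀ P₁ : Measure (ℤ → X)) [IsProbabilityMeasure P₀] [IsProbabilityMeasure P₁]
    (hP₁ : ∀ (s : Finset ℤ) (f : ℤ → Set X), (∀ i, MeasurableSet (f i)) →
      P₁ {ω | ∀ i ∈ s, ω i ∈ f i} = ∏ i ∈ s, μ (f i))
    (hP₀ : ∀ (s : Finset ℤ) (f : ℤ → Set X), (∀ i, MeasurableSet (f i)) →
      P₀ {ω | ∀ i ∈ s, ω i ∈ f i} = ∏ i ∈ s, (μ.withDensity (g i)) (f i))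
    (hsum : Summable (fun i : ℤ => Real.log ((essSup (g i) μ).toReal))) :
    P₀ ≪ P₁ ∧
      ∀ A : Set (ℤ → X), MeasurableSet A →
        P₀ A ≤ (∏' i : ℤ, essSup (g i) μ) * P₁ A := by
  classical
  set a : ℤ → ℝ≥0∞ := fun i => essSup (g i) μ with ha
  -- each essSup is at least 1
  have h1 : ∀ i, 1 ≤ a i := by
    intro i
    have h := lintegral_mono_ae (ae_le_essSup (f := g i) (μ := μ))
    rw [hgint i, lintegral_const, measure_univ, mul_one] at h
    exact h
  set C : ℝ≥0∞ := ∏' i, a i with hCdef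
  have hCfin : ∀ s : Finset ℤ, ∏ i ∈ s, a i ≤ C := finset_prod_le_tprod h1
  -- C is finite
  have htr1 : ∀ i, (1 : ℝ) ≤ (a i).toReal := by
    intro i
    have := ENNReal.toReal_mono (hgbd i).ne (h1 i)
    simpa using this
  have hCne : C ≠ ⊤ := by
    set T := ∑' i, Real.log ((a i).toReal) with hT
    have hbound : ∀ s : Finset ℤ, ∏ i ∈ s, a i ≤ ENNReal.ofReal (Real.exp T) := by
      intro s
      have hprodne : (∏ i ∈ s, a i) ≠ ⊤ :=
        (ENNReal.prod_lt_top fun i _ => hgbd i).ne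
      have e1 : ∏ i ∈ s, a i = ENNReal.ofReal ((∏ i ∈ s, a i).toReal) :=
        (ENNReal.ofReal_toReal hprodne).symm
      rw [e1, ENNReal.toReal_prod]
      refine ENNReal.ofReal_le_ofReal ?_
      have e2 : ∏ i ∈ s, (a i).toReal = Real.exp (∑ i ∈ s, Real.log ((a i).toReal)) := by
        rw [Real.exp_sum]
        exact Finset.prod_congr rfl fun i _ =>
          (Real.exp_log (lt_of_lt_of_le one_pos (htr1 i))).symm
      rw [e2]
      refine Real.exp_le_exp.2 ?_
      exact Summable.sum_le_tsum s (fun i _ => Real.log_nonneg (htr1 i)) hsum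
    exact ((tprod_le_of_forall h1 hbound).trans_lt ENNReal.ofReal_lt_top).ne
  -- the algebra of cylinder sets
  set 𝒜 : Set (Set (ℤ → X)) :=
    {A | ∃ (s : Finset ℤ) (B : Set ((i : s) → X)), MeasurableSet B ∧
      A = (fun (ω : ℤ → X) (i : s) => ω (i : ℤ)) ⁻¹' B} with h𝒜def
  have hπ : ∀ s : Finset ℤ, Measurable (fun (ω : ℤ → X) (i : s) => ω (i : ℤ)) :=
    fun s => measurable_pi_lambda _ fun i => measurable_pi_apply _
  have halg : IsSetAlgebra 𝒜 := by
    constructor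
    · exact ⟨∅, ∅, MeasurableSet.empty, by simp⟩
    · rintro A ⟨s, B, hB, rfl⟩
      exact ⟨s, Bᶜ, hB.compl, by rw [Set.preimage_compl]⟩
    · rintro A A' ⟨s, B, hB, rfl⟩ ⟨t, B', hB', rfl⟩
      refine ⟨s ∪ t,
        ((fun (h : (i : (s ∪ t : Finset ℤ)) → X) (i : s) =>
            h ⟨i, Finset.mem_union_left t i.2⟩) ⁻¹' B) ∪
        ((fun (h : (i : (s ∪ t : Finset ℤ)) → X) (i : t) =>
            h ⟨i, Finset.mem_union_right s i.2⟩) ⁻¹' B'), ?_, ?_⟩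
      · exact ((measurable_pi_lambda _ fun i => measurable_pi_apply _) hB).union
          ((measurable_pi_lambda _ fun i => measurable_pi_apply _) hB')
      · rfl
  have hgen : (MeasurableSpace.pi : MeasurableSpace (ℤ → X)) =
      MeasurableSpace.generateFrom 𝒜 := by
    refine le_antisymm ?_ (MeasurableSpace.generateFrom_le ?_)
    · show (⨆ i : ℤ, MeasurableSpace.comap (fun ω : ℤ → X => ω i) inferInstance) ≤
        MeasurableSpace.generateFrom 𝒜
      refine iSup_le fun i => ?_
      rintro A ⟨E, hE, rfl⟩
      refine MeasurableSpace.measurableSet_generateFrom ?_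
      refine ⟨{i}, (fun (h : (j : ({i} : Finset ℤ)) → X) =>
        h ⟨i, Finset.mem_singleton_self i⟩) ⁻¹' E, measurable_pi_apply _ hE, rfl⟩
    · rintro A ⟨s, B, hB, rfl⟩
      exact hπ s hB
  have hρdense : (P₀ + P₁).MeasureDense 𝒜 :=
    Measure.MeasureDense.of_generateFrom_isSetAlgebra_finite (P₀ + P₁) halg hgen
  -- finiteness instances
  haveI h0fin : ∀ i : ℤ, IsFiniteMeasure (μ.withDensity (g i)) := fun i =>
    ⟨by rw [MeasureTheory.withDensity_apply _ MeasurableSet.univ, Measure.restrict_univ,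
        hgint i]; exact ENNReal.one_lt_top⟩
  haveI h1fin : ∀ _ : ℤ, IsFiniteMeasure μ := fun _ => inferInstance
  -- the inequality on the algebra
  have hmem : ∀ A ∈ 𝒜, P₀ A ≤ C * P₁ A := by
    rintro A ⟨s, B, hB, rfl⟩
    have hmap0 := map_proj_eq (fun i => μ.withDensity (g i)) P₀ hP₀ s
    have hmap1 := map_proj_eq (fun _ => μ) P₁ hP₁ s
    rw [← Measure.map_apply (hπ s) hB, ← Measure.map_apply (hπ s) hB, ← hmap0, ← hmap1]
    have hle : ∀ i : s, μ.withDensity (g (i : ℤ)) ≤ a (i : ℤ) • μ := by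
      intro i
      have := withDensity_mono (μ := μ) (ae_le_essSup (f := g (i : ℤ)))
      rwa [withDensity_const] at this
    calc (Measure.pi fun i : s => μ.withDensity (g (i : ℤ))) B
        ≤ (Measure.pi fun i : s => a (i : ℤ) • μ) B := pi_apply_mono _ _ hle hB
      _ = ((∏ i : s, a (i : ℤ)) • Measure.pi fun _ : s => μ) B := by
          rw [pi_smul_meas μ _ fun i : s => (hgbd (i : ℤ)).ne]
      _ = (∏ i ∈ s, a i) * (Measure.pi fun _ : s => μ) B := by
          rw [Measure.smul_apply, smul_eq_mul, Finset.prod_coe_sort]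
      _ ≤ C * (Measure.pi fun _ : s => μ) B := mul_le_mul_left (hCfin s) _
  -- extension to all measurable sets
  have key : ∀ A : Set (ℤ → X), MeasurableSet A → P₀ A ≤ C * P₁ A := by
    intro A hA
    refine ENNReal.le_of_forall_pos_le_add fun ε hε _ => ?_
    set K : ℝ≥0∞ := C + 1 with hK
    have hKne : K ≠ ⊤ := by
      simp [hK, hCne]
    have hKpos : 0 < K.toReal :=
      ENNReal.toReal_pos (by simp [hK]) hKne
    set δ : ℝ := (ε : ℝ) / K.toReal with hδ
    have hδpos : 0 < δ := div_pos (by exact_mod_cast hε) hKpos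
    obtain ⟨B, hB𝒜, hABδ⟩ := hρdense.approx A hA (measure_ne_top _ _) δ hδpos
    set d : ℝ≥0∞ := (P₀ + P₁) (symmDiff A B) with hd
    have hdle : d ≤ ENNReal.ofReal δ := hABδ.le
    have hsub1 : A \ B ⊆ symmDiff A B := by rw [Set.symmDiff_def]; exact Set.subset_union_left
    have hsub2 : B \ A ⊆ symmDiff A B := by rw [Set.symmDiff_def]; exact Set.subset_union_right
    have h0d : P₀ (A \ B) ≤ d := by
      refine le_trans (measure_mono hsub1) ?_
      rw [hd, Measure.add_apply]
      exact le_add_right le_rfl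
    have h1d : P₁ (B \ A) ≤ d := by
      refine le_trans (measure_mono hsub2) ?_
      rw [hd, Measure.add_apply]
      exact le_add_left le_rfl
    have step1 : P₀ A ≤ P₀ B + d :=
      le_trans (measure_le_inter_add_diff _ _ _)
        (add_le_add (measure_mono Set.inter_subset_right) h0d)
    have step2 : P₁ B ≤ P₁ A + d :=
      le_trans (measure_le_inter_add_diff _ _ _)
        (add_le_add (measure_mono Set.inter_subset_right) h1d)
    have hKd : K * ENNReal.ofReal δ ≤ (ε : ℝ≥0∞) := by
      rw [← ENNReal.ofReal_toReal hKne, ← ENNReal.ofReal_mul hKpos.le, hδ,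
        mul_div_cancel₀ _ hKpos.ne']
      simp
    calc P₀ A ≤ P₀ B + d := step1
      _ ≤ C * P₁ B + d := add_le_add_left (hmem B hB𝒜) d
      _ ≤ C * (P₁ A + d) + d := add_le_add_left (mul_le_mul_right step2 C) d
      _ = C * P₁ A + K * d := by rw [mul_add, hK, add_mul, one_mul, add_assoc]
      _ ≤ C * P₁ A + K * ENNReal.ofReal δ := add_le_add_right (mul_le_mul_right hdle K) _
      _ ≤ C * P₁ A + (ε : ℝ≥0∞) := add_le_add_right hKd _
  refine ⟨Measure.AbsolutelyContinuous.mk fun B hB hB0 => ?_, fun A hA => key A hA⟩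
  have h := key B hB
  rw [hB0, mul_zero] at h
  exact le_antisymm h zero_le
end
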